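/- The measure ν and Lebesgue measure restricted to (0,1) are mutually singular: there exists a Borel set Y ⊆ (0,1) with ℓ((0,1) \ Y) = 0 and ν(Y) = 0. -/

import Mathlib

open MeasureTheory

/-- The Gauss map `G(x) = 1/x - ⌊1/x⌋`. -/
noncomputable def gaussMap (x : ℝ) : ℝ := Int.fract x⁻¹

/-- The `m`-th continued fraction digit `a_m(x) = ⌊1 / G^{m-1}(x)⌋` (for `m ≥ 1`). -/
noncomputable def cfDigit (m : ℕ) (x : ℝ) : ℤ := ⌊(gaussMap^[m - 1] x)⁻¹⌋

/-- `ν` is the harmonic measure of the nearest-neighbour non-backtracking random walk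
on the trivalent tree dual to the Farey graph: the pushforward under the continued
fraction map `Φ` of the product over `i ≥ 1` of the measures `μ₀({k}) = 2^{-k}` on
the positive integers.  Equivalently, `ν` is a Borel probability measure giving each
cylinder set `{x ∈ (0,1) : x irrational, a_i(x) = b_i for 1 ≤ i ≤ k}` the measure
`∏_{i=1}^{k} 2^{-b_i}`. -/
def IsCFHarmonicMeasure (ν : Measure ℝ) : Prop :=
  IsProbabilityMeasure ν ∧
  ∀ (k : ℕ) (b : Fin k → ℕ), (∀ i, 1 ≤ b i) →
    ν {x | x ∈ Set.Ioo (0 : ℝ) 1 ∧ Irrational x ∧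
          ∀ i : Fin k, cfDigit ((i : ℕ) + 1) x = (b i : ℤ)}
      = ∏ i, (2 : ENNReal)⁻¹ ^ (b i)

/-!
Under `ν` the digits are independent with `P(a = k) = 2^{-k}`, so `ν(a_{i+1} > M i) ≤ 2^{-M i}`;
for `M i = 2(⌊log₂ i⌋ + 1)` these bounds are summable, and by Borel–Cantelli `ν`-almost every `x`
has `a_{i+1}(x) ≤ M i` for all large `i`.

For Lebesgue measure we use the Gauss density `(1 + y)⁻¹`: the inverse branches `u ↦ 1/(b + u)`,
`1 ≤ b ≤ D`, carry it to at most `D/(D+1)` times itself, so the irrationals whose first `n` digits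
are `≤ D` have measure at most `2 (D/(D+1))^n ≤ 2D/n`. Since `M n = o(n)`, taking `D = T + M n`
shows that the points whose digits are eventually `≤ M` form a Lebesgue-null set.
-/

open Filter Topology Set Asymptotics
open scoped ENNReal

lemma irrational_gaussMap {x : ℝ} (hx : Irrational x) : Irrational (gaussMap x) :=
  hx.inv.sub_intCast ⌊x⁻¹⌋

lemma gaussMap_mem_Ioo {x : ℝ} (hx : Irrational x) : gaussMap x ∈ Ioo 0 1 :=
  ⟨(Int.fract_nonneg _).lt_of_ne' (irrational_gaussMap hx).ne_zero, Int.fract_lt_one _⟩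

lemma irrational_iterate_gaussMap {x : ℝ} (hx : Irrational x) (i : ℕ) :
    Irrational (gaussMap^[i] x) := by
  induction i with
  | zero => exact hx
  | succ i ih => rw [Function.iterate_succ_apply']; exact irrational_gaussMap ih

lemma iterate_gaussMap_mem_Ioo {x : ℝ} (hx : x ∈ Ioo 0 1) (hirr : Irrational x) (i : ℕ) :
    gaussMap^[i] x ∈ Ioo 0 1 := by
  cases i with
  | zero => exact hx
  | succ i =>
    rw [Function.iterate_succ_apply']
    exact gaussMap_mem_Ioo (irrational_iterate_gaussMap hirr i)

lemma cfDigit_succ (i : ℕ) (x : ℝ) : cfDigit (i + 1) x = ⌊(gaussMap^[i] x)⁻¹⌋ := rfl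

lemma cfDigit_succ_gaussMap (i : ℕ) (x : ℝ) : cfDigit (i + 1) (gaussMap x) = cfDigit (i + 2) x := by
  simp only [cfDigit_succ, Function.iterate_succ_apply]

lemma one_le_cfDigit {x : ℝ} (hx : x ∈ Ioo 0 1) (hirr : Irrational x) (i : ℕ) :
    1 ≤ cfDigit (i + 1) x := by
  have hy := iterate_gaussMap_mem_Ioo hx hirr i
  exact Int.le_floor.2 (by simpa using (one_le_inv₀ hy.1).2 hy.2.le)

lemma inv_floor_inv_add_gaussMap (x : ℝ) : ((⌊x⁻¹⌋ : ℝ) + gaussMap x)⁻¹ = x := by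
  rw [gaussMap, Int.floor_add_fract, inv_inv]

lemma measurable_gaussMap : Measurable gaussMap :=
  measurable_fract.comp measurable_inv

@[fun_prop]
lemma measurable_cfDigit (m : ℕ) : Measurable (cfDigit m) :=
  ((measurable_gaussMap.iterate _).inv).floor

lemma measurableSet_irrational : MeasurableSet {x : ℝ | Irrational x} :=
  IsGδ.setOfPred_irrational.measurableSet

def cfCylinder {k : ℕ} (b : Fin k → ℕ) : Set ℝ :=
  {x | x ∈ Ioo (0 : ℝ) 1 ∧ Irrational x ∧ ∀ i : Fin k, cfDigit ((i : ℕ) + 1) x = (b i : ℤ)}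

def digitsEventuallyLE (M : ℕ → ℕ) : Set ℝ :=
  {x | x ∈ Ioo (0 : ℝ) 1 ∧ Irrational x ∧ ∀ᶠ i in atTop, cfDigit (i + 1) x ≤ M i}

lemma measurableSet_digitsEventuallyLE (M : ℕ → ℕ) : MeasurableSet (digitsEventuallyLE M) := by
  simp only [digitsEventuallyLE, eventually_atTop]
  refine measurableSet_Ioo.inter (measurableSet_irrational.inter (measurableSet_setOfPred.2 ?_))
  fun_prop

lemma ENNReal.tsum_fin_pi_prod {α : Type*} : ∀ {k : ℕ} (f : Fin k → α → ℝ≥0∞),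
    ∑' b : Fin k → α, ∏ i, f i (b i) = ∏ i, ∑' a, f i a
  | 0, f => by simp
  | k + 1, f => by
    rw [← (Fin.consEquiv fun _ => α).tsum_eq, ENNReal.tsum_prod', Fin.prod_univ_succ,
      ← ENNReal.tsum_fin_pi_prod, ← ENNReal.tsum_mul_right]
    refine tsum_congr fun a => ?_
    rw [← ENNReal.tsum_mul_left]
    refine tsum_congr fun b => ?_
    simp [Fin.prod_univ_succ, Fin.consEquiv]

lemma ENNReal.tsum_inv_two_pow_succ : ∑' v : ℕ, (2 : ℝ≥0∞)⁻¹ ^ (v + 1) = 1 := by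
  rw [ENNReal.tsum_geometric_add_one, ENNReal.one_sub_inv_two, inv_inv,
    ENNReal.inv_mul_cancel two_ne_zero ENNReal.ofNat_ne_top]

section HarmonicMeasure

variable {ν : Measure ℝ}

lemma IsCFHarmonicMeasure.ae_mem_Ioo_irrational (hν : IsCFHarmonicMeasure ν) :
    ∀ᵐ x ∂ν, x ∈ Ioo (0 : ℝ) 1 ∧ Irrational x := by
  have := hν.1
  have hΩ : ν (Ioo 0 1 ∩ {x | Irrational x}) = 1 := by
    convert hν.2 0 Fin.elim0 (fun i => i.elim0) using 2 <;> simp [Set.ext_iff]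
  exact (prob_compl_eq_zero_iff (measurableSet_Ioo.inter measurableSet_irrational)).2 hΩ

lemma IsCFHarmonicMeasure.measure_cfDigit_ge_le (hν : IsCFHarmonicMeasure ν) (i m : ℕ) :
    ν {x | x ∈ Ioo (0 : ℝ) 1 ∧ Irrational x ∧ (m + 1 : ℤ) ≤ cfDigit (i + 1) x} ≤ 2⁻¹ ^ m := by
  let digits (c : Fin i → ℕ) (v : ℕ) : Fin (i + 1) → ℕ := Fin.snoc (fun j => c j + 1) (v + m + 1)
  have hcover : {x | x ∈ Ioo (0 : ℝ) 1 ∧ Irrational x ∧ (m + 1 : ℤ) ≤ cfDigit (i + 1) x} ⊆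
      ⋃ c, ⋃ v, cfCylinder (digits c v) := by
    rintro x ⟨hx, hirr, hm⟩
    refine mem_iUnion₂.2 ⟨fun j => (cfDigit (j + 1) x).toNat - 1,
      (cfDigit (i + 1) x).toNat - (m + 1), hx, hirr, fun j => ?_⟩
    induction j using Fin.lastCases with
    | last =>
      simp only [Fin.val_last, Fin.snoc_last, Nat.cast_add, Nat.cast_one, digits]
      omega
    | cast j =>
      have := one_le_cfDigit hx hirr j
      simp only [Fin.val_castSucc, Fin.snoc_castSucc, Nat.cast_add, Nat.cast_one, digits]
      omega
  have hcylinder (c : Fin i → ℕ) (v : ℕ) :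
      ν (cfCylinder (digits c v)) = (∏ j, 2⁻¹ ^ (c j + 1)) * 2⁻¹ ^ m * 2⁻¹ ^ (v + 1) := by
    rw [cfCylinder, hν.2 _ _ fun j => by
      induction j using Fin.lastCases <;> simp [digits]]
    simp only [Fin.prod_univ_castSucc, Fin.snoc_castSucc, Fin.snoc_last, pow_add, pow_one, digits]
    ring
  calc _ ≤ ∑' c, ∑' v, ν (cfCylinder (digits c v)) :=
        (measure_mono hcover).trans ((measure_iUnion_le _).trans
          (ENNReal.tsum_le_tsum fun c => measure_iUnion_le _))
    _ = 2⁻¹ ^ m := by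
        simp_rw [hcylinder, ENNReal.tsum_mul_left, ENNReal.tsum_mul_right,
          ENNReal.tsum_inv_two_pow_succ]
        rw [ENNReal.tsum_fin_pi_prod (fun _ v => (2 : ℝ≥0∞)⁻¹ ^ (v + 1))]
        simp [ENNReal.tsum_inv_two_pow_succ]

lemma IsCFHarmonicMeasure.ae_mem_digitsEventuallyLE (hν : IsCFHarmonicMeasure ν) {M : ℕ → ℕ}
    (hM : ∑' i, (2 : ℝ≥0∞)⁻¹ ^ M i ≠ ∞) : ∀ᵐ x ∂ν, x ∈ digitsEventuallyLE M := by
  have hfinite : ∑' i, ν {x | x ∈ Ioo (0 : ℝ) 1 ∧ Irrational x ∧ (M i + 1 : ℤ) ≤ cfDigit (i + 1) x}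
      ≠ ∞ :=
    ne_top_of_le_ne_top hM (ENNReal.tsum_le_tsum fun i => hν.measure_cfDigit_ge_le i (M i))
  filter_upwards [hν.ae_mem_Ioo_irrational, ae_eventually_notMem hfinite]
    with x ⟨hx, hirr⟩ hgood
  exact ⟨hx, hirr, hgood.mono fun i hi => by by_contra h; exact hi ⟨hx, hirr, by omega⟩⟩

end HarmonicMeasure

def firstDigitsLE (D n : ℕ) : Set ℝ :=
  {x | x ∈ Ioo (0 : ℝ) 1 ∧ Irrational x ∧ ∀ i < n, cfDigit (i + 1) x ≤ D}

lemma measurableSet_firstDigitsLE (D n : ℕ) : MeasurableSet (firstDigitsLE D n) :=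
  measurableSet_Ioo.inter (measurableSet_irrational.inter (measurableSet_setOfPred.2 (by fun_prop)))

lemma firstDigitsLE_succ_subset (D n : ℕ) :
    firstDigitsLE D (n + 1) ⊆ ⋃ b : Fin D, (fun u => ((b : ℝ) + 1 + u)⁻¹) '' firstDigitsLE D n := by
  rintro y ⟨hy, hirr, hdigits⟩
  have h1 : 1 ≤ ⌊y⁻¹⌋ := one_le_cfDigit hy hirr 0
  have hD : ⌊y⁻¹⌋ ≤ D := hdigits 0 n.succ_pos
  have hcast : ((⌊y⁻¹⌋.toNat - 1 : ℕ) : ℝ) + 1 = ⌊y⁻¹⌋ := by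
    have : ((⌊y⁻¹⌋.toNat - 1 : ℕ) : ℤ) + 1 = ⌊y⁻¹⌋ := by omega
    exact_mod_cast this
  refine mem_iUnion.2 ⟨⟨⌊y⁻¹⌋.toNat - 1, by omega⟩, gaussMap y,
    ⟨gaussMap_mem_Ioo hirr, irrational_gaussMap hirr, fun i hi => ?_⟩, ?_⟩
  · rw [cfDigit_succ_gaussMap]
    exact hdigits (i + 1) (by omega)
  · simp only [hcast, inv_floor_inv_add_gaussMap]

/-- The density of the Gauss measure, without its normalising factor `1 / log 2`. -/
noncomputable def gaussWeight (y : ℝ) : ℝ≥0∞ := ENNReal.ofReal (1 + y)⁻¹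

lemma measurable_gaussWeight : Measurable gaussWeight := by
  unfold gaussWeight
  fun_prop

lemma gaussWeight_le_one {y : ℝ} (hy : 0 ≤ y) : gaussWeight y ≤ 1 :=
  ENNReal.ofReal_le_one.2 (inv_le_one_of_one_le₀ (by linarith))

lemma one_le_two_mul_gaussWeight {y : ℝ} (hy : y ∈ Ioc (-1 : ℝ) 1) : 1 ≤ 2 * gaussWeight y := by
  have hpos : 0 < 1 + y := by linarith [hy.1]
  rw [gaussWeight, ← ENNReal.ofReal_ofNat 2, ← ENNReal.ofReal_mul zero_le_two]
  refine ENNReal.one_le_ofReal.2 ?_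
  rw [← div_eq_mul_inv, one_le_div hpos]
  linarith [hy.2]

lemma setLIntegral_gaussWeight_image_inv_add {c : ℝ} (hc : 0 ≤ c) {V : Set ℝ}
    (hV : MeasurableSet V) (hV0 : V ⊆ Ioi 0) :
    ∫⁻ y in (fun u => (c + u)⁻¹) '' V, gaussWeight y =
      ∫⁻ u in V, ENNReal.ofReal ((c + u) * (c + u + 1))⁻¹ := by
  have hpos : ∀ u ∈ V, 0 < c + u := fun u hu => add_pos_of_nonneg_of_pos hc (hV0 hu)
  have hderiv : ∀ u ∈ V, HasDerivWithinAt (fun u => (c + u)⁻¹) (-1 / (c + u) ^ 2) V u :=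
    fun u hu => (((hasDerivAt_id' u).const_add c).inv (hpos u hu).ne').hasDerivWithinAt
  have hinj : InjOn (fun u => (c + u)⁻¹) V := fun u _ v _ h => by simpa using h
  rw [lintegral_image_eq_lintegral_abs_deriv_mul hV hderiv hinj]
  refine setLIntegral_congr_fun hV fun u hu => ?_
  have := hpos u hu
  rw [gaussWeight, ← ENNReal.ofReal_mul (abs_nonneg _), abs_div, abs_neg, abs_one,
    abs_of_pos (by positivity)]
  congr 1
  field_simp

lemma sum_range_inv_mul_le_div_mul_inv (D : ℕ) {u : ℝ} (hu : 0 ≤ u) :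
    ∑ b ∈ Finset.range D, (((b : ℝ) + 1 + u) * ((b : ℝ) + 1 + u + 1))⁻¹ ≤
      D / (D + 1) * (1 + u)⁻¹ := by
  have htelescope (b : ℕ) : (((b : ℝ) + 1 + u) * ((b : ℝ) + 1 + u + 1))⁻¹ =
      ((b : ℝ) + 1 + u)⁻¹ - (((b + 1 : ℕ) : ℝ) + 1 + u)⁻¹ := by
    push_cast
    field_simp
    ring
  rw [Finset.sum_congr rfl fun b _ => htelescope b,
    Finset.sum_range_sub' (fun b : ℕ => ((b : ℝ) + 1 + u)⁻¹)]
  push_cast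
  rw [zero_add, div_mul_eq_mul_div, le_div_iff₀ (by positivity)]
  field_simp
  nlinarith [mul_nonneg (mul_nonneg D.cast_nonneg (by linarith : (0 : ℝ) ≤ 1 + u)) hu]

lemma setLIntegral_gaussWeight_iUnion_image_le {V : Set ℝ} (hV : MeasurableSet V)
    (hV0 : V ⊆ Ioi 0) (D : ℕ) :
    ∫⁻ y in ⋃ b : Fin D, (fun u => ((b : ℝ) + 1 + u)⁻¹) '' V, gaussWeight y ≤
      ENNReal.ofReal (D / (D + 1)) * ∫⁻ u in V, gaussWeight u :=
  calc _ ≤ ∑' b : Fin D, ∫⁻ y in (fun u => ((b : ℝ) + 1 + u)⁻¹) '' V, gaussWeight y :=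
        lintegral_iUnion_le _ _
    _ = ∫⁻ u in V, ∑ b ∈ Finset.range D,
          ENNReal.ofReal (((b : ℝ) + 1 + u) * ((b : ℝ) + 1 + u + 1))⁻¹ := by
        rw [lintegral_finsetSum _ fun b _ => by fun_prop, tsum_fintype]
        refine (Finset.sum_congr rfl fun b _ =>
          setLIntegral_gaussWeight_image_inv_add (by positivity) hV hV0).trans ?_
        exact Fin.sum_univ_eq_sum_range
          (fun b => ∫⁻ u in V, ENNReal.ofReal (((b : ℝ) + 1 + u) * ((b : ℝ) + 1 + u + 1))⁻¹) D
    _ ≤ ∫⁻ u in V, ENNReal.ofReal (D / (D + 1)) * gaussWeight u := by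
        refine setLIntegral_mono' hV fun u hu => ?_
        have hu0 : 0 ≤ u := (hV0 hu).le
        rw [← ENNReal.ofReal_sum_of_nonneg fun b _ => by positivity, gaussWeight,
          ← ENNReal.ofReal_mul (by positivity)]
        exact ENNReal.ofReal_le_ofReal (sum_range_inv_mul_le_div_mul_inv D hu0)
    _ = _ := lintegral_const_mul _ measurable_gaussWeight

lemma setLIntegral_gaussWeight_firstDigitsLE_le (D n : ℕ) :
    ∫⁻ y in firstDigitsLE D n, gaussWeight y ≤ ENNReal.ofReal (D / (D + 1)) ^ n := by
  induction n with
  | zero =>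
    calc _ ≤ ∫⁻ _ in firstDigitsLE D 0, 1 :=
          setLIntegral_mono' (measurableSet_firstDigitsLE D 0) fun y hy =>
            gaussWeight_le_one hy.1.1.le
      _ ≤ volume (Ioo (0 : ℝ) 1) := by
          rw [setLIntegral_one]
          exact measure_mono fun y hy => hy.1
      _ = _ := by simp
  | succ n ih =>
    calc _ ≤ ∫⁻ y in ⋃ b : Fin D, (fun u => ((b : ℝ) + 1 + u)⁻¹) '' firstDigitsLE D n,
          gaussWeight y := lintegral_mono_set (firstDigitsLE_succ_subset D n)
      _ ≤ ENNReal.ofReal (D / (D + 1)) * ∫⁻ u in firstDigitsLE D n, gaussWeight u :=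
          setLIntegral_gaussWeight_iUnion_image_le (measurableSet_firstDigitsLE D n)
            (fun u hu => hu.1.1) D
      _ ≤ _ := by rw [pow_succ']; gcongr

lemma volume_firstDigitsLE_le (D n : ℕ) :
    volume (firstDigitsLE D n) ≤ 2 * ENNReal.ofReal (D / (D + 1)) ^ n :=
  calc volume (firstDigitsLE D n) = ∫⁻ _ in firstDigitsLE D n, 1 := (setLIntegral_one _).symm
    _ ≤ ∫⁻ y in firstDigitsLE D n, 2 * gaussWeight y :=
        setLIntegral_mono' (measurableSet_firstDigitsLE D n) fun y hy =>
          one_le_two_mul_gaussWeight ⟨by linarith [hy.1.1], hy.1.2.le⟩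
    _ = 2 * ∫⁻ y in firstDigitsLE D n, gaussWeight y := lintegral_const_mul _ measurable_gaussWeight
    _ ≤ _ := by gcongr; exact setLIntegral_gaussWeight_firstDigitsLE_le D n

lemma div_add_one_pow_le_div (D : ℕ) {n : ℕ} (hn : n ≠ 0) :
    ((D : ℝ) / (D + 1)) ^ n ≤ D / n := by
  rcases D.eq_zero_or_pos with rfl | hD
  · simp [hn]
  have hD' : (0 : ℝ) < D := Nat.cast_pos.2 hD
  rw [show (D : ℝ) / (D + 1) = (1 + 1 / (D : ℝ))⁻¹ by field_simp, inv_pow]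
  calc ((1 + 1 / (D : ℝ)) ^ n)⁻¹ ≤ (n * (1 / (D : ℝ)))⁻¹ :=
        inv_anti₀ (by positivity) ((le_add_of_nonneg_left zero_le_one).trans
          (one_add_mul_le_pow (by linarith [one_div_pos.2 hD']) n))
    _ = D / n := by rw [mul_one_div, inv_div]

lemma volume_setOf_forall_cfDigit_le {M : ℕ → ℕ} (hmono : Monotone M)
    (hM : (fun n => (M n : ℝ)) =o[atTop] fun n => (n : ℝ)) :
    volume {x | x ∈ Ioo (0 : ℝ) 1 ∧ Irrational x ∧ ∀ i, cfDigit (i + 1) x ≤ M i} = 0 := by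
  have hbound (n : ℕ) (hn : n ≠ 0) :
      volume {x | x ∈ Ioo (0 : ℝ) 1 ∧ Irrational x ∧ ∀ i, cfDigit (i + 1) x ≤ M i} ≤
        2 * ENNReal.ofReal (M n / n) :=
    calc _ ≤ volume (firstDigitsLE (M n) n) := by
          refine measure_mono fun x ⟨hx, hirr, hdigits⟩ => ?_
          exact ⟨hx, hirr, fun i hi => (hdigits i).trans (by exact_mod_cast hmono hi.le)⟩
      _ ≤ 2 * ENNReal.ofReal (M n / (M n + 1)) ^ n := volume_firstDigitsLE_le _ _
      _ ≤ _ := by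
          rw [← ENNReal.ofReal_pow (by positivity)]
          gcongr
          exact div_add_one_pow_le_div _ hn
  have hlim : Tendsto (fun n => 2 * ENNReal.ofReal (M n / n)) atTop (𝓝 0) := by
    simpa using ENNReal.Tendsto.const_mul (ENNReal.tendsto_ofReal hM.tendsto_div_nhds_zero)
      (Or.inr ENNReal.ofNat_ne_top)
  exact le_antisymm (ge_of_tendsto hlim ((eventually_ne_atTop 0).mono hbound)) bot_le

lemma exists_forall_le_add_of_eventually_le {f g : ℕ → ℕ} (h : ∀ᶠ i in atTop, f i ≤ g i) :
    ∃ T, ∀ i, f i ≤ T + g i := by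
  obtain ⟨N, hN⟩ := eventually_atTop.1 h
  refine ⟨∑ i ∈ Finset.range N, f i, fun i => ?_⟩
  rcases lt_or_ge i N with hi | hi
  · exact (Finset.single_le_sum (fun _ _ => Nat.zero_le _) (Finset.mem_range.2 hi)).trans
      (Nat.le_add_right _ _)
  · exact (hN i hi).trans (Nat.le_add_left _ _)

lemma volume_digitsEventuallyLE {M : ℕ → ℕ} (hmono : Monotone M)
    (hM : (fun n => (M n : ℝ)) =o[atTop] fun n => (n : ℝ)) :
    volume (digitsEventuallyLE M) = 0 := by
  have hcover : digitsEventuallyLE M ⊆ ⋃ T : ℕ,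
      {x | x ∈ Ioo (0 : ℝ) 1 ∧ Irrational x ∧ ∀ i, cfDigit (i + 1) x ≤ (T + M i : ℕ)} := by
    rintro x ⟨hx, hirr, hdigits⟩
    obtain ⟨T, hT⟩ := exists_forall_le_add_of_eventually_le
      (f := fun i => (cfDigit (i + 1) x).toNat) (g := M) (hdigits.mono fun i hi => by omega)
    exact mem_iUnion.2 ⟨T, hx, hirr, fun i => by have := hT i; push_cast; omega⟩
  refine measure_mono_null hcover (measure_iUnion_null fun T =>
    volume_setOf_forall_cfDigit_le (fun i j hij => by have := hmono hij; omega) ?_)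
  push_cast
  exact ((isLittleO_const_id_atTop (T : ℝ)).comp_tendsto tendsto_natCast_atTop_atTop).add hM

def digitThreshold (i : ℕ) : ℕ := 2 * (Nat.log 2 i + 1)

lemma monotone_digitThreshold : Monotone digitThreshold := fun i j hij => by
  have := Nat.log_mono_right (b := 2) hij
  unfold digitThreshold
  omega

lemma isLittleO_digitThreshold :
    (fun n => (digitThreshold n : ℝ)) =o[atTop] fun n => (n : ℝ) := by
  have hlog : (fun n : ℕ => Real.log n) =o[atTop] fun n => (n : ℝ) :=
    Real.isLittleO_log_id_atTop.comp_tendsto tendsto_natCast_atTop_atTop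
  have hnatLog : (fun n : ℕ => (Nat.log 2 n : ℝ)) =O[atTop] fun n : ℕ => Real.log n := by
    refine IsBigO.of_bound (Real.log 2)⁻¹ (Eventually.of_forall fun n => ?_)
    rw [Real.norm_of_nonneg (Nat.cast_nonneg _), Real.norm_of_nonneg (Real.log_natCast_nonneg n),
      inv_mul_eq_div]
    exact Real.natLog_le_logb n 2
  have hone : (fun _ : ℕ => (1 : ℝ)) =o[atTop] fun n => (n : ℝ) :=
    (isLittleO_const_id_atTop (1 : ℝ)).comp_tendsto tendsto_natCast_atTop_atTop
  simp only [digitThreshold, Nat.cast_mul, Nat.cast_add, Nat.cast_ofNat, Nat.cast_one]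
  exact ((hnatLog.trans_isLittleO hlog).add hone).const_mul_left 2

lemma tsum_inv_two_pow_digitThreshold_ne_top :
    ∑' i, (2 : ℝ≥0∞)⁻¹ ^ digitThreshold i ≠ ∞ := by
  have hle (i : ℕ) :
      (2 : ℝ≥0∞)⁻¹ ^ digitThreshold i ≤ ENNReal.ofReal (1 / ((i : ℝ) + 1) ^ 2) := by
    have hi : (i : ℝ) + 1 ≤ 2 ^ (Nat.log 2 i + 1) := by
      exact_mod_cast Nat.lt_pow_succ_log_self one_lt_two i
    rw [← ENNReal.ofReal_ofNat 2, ← ENNReal.ofReal_inv_of_pos two_pos,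
      ← ENNReal.ofReal_pow (by norm_num), digitThreshold, pow_mul', inv_pow, inv_pow, ← one_div]
    exact ENNReal.ofReal_le_ofReal
      (one_div_le_one_div_of_le (by positivity) (pow_le_pow_left₀ (by positivity) hi 2))
  have hsummable : Summable fun i : ℕ => 1 / ((i : ℝ) + 1) ^ 2 := by
    simpa using (summable_nat_add_iff 1).2 (Real.summable_one_div_nat_pow.2 one_lt_two)
  refine ne_top_of_le_ne_top ?_ (ENNReal.tsum_le_tsum hle)
  rw [← ENNReal.ofReal_tsum_of_nonneg (fun i => by positivity) hsummable]
  exact ENNReal.ofReal_ne_top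

/-- The harmonic measure `ν` and Lebesgue measure restricted to `(0,1)` are mutually
singular: there is a Borel set `Y ⊆ (0,1)` of full Lebesgue measure in `(0,1)` and
zero harmonic measure. -/
theorem harmonic_measure_singular (ν : Measure ℝ) (hν : IsCFHarmonicMeasure ν) :
    ∃ Y : Set ℝ, Y ⊆ Set.Ioo (0 : ℝ) 1 ∧ MeasurableSet Y ∧
      volume (Set.Ioo (0 : ℝ) 1 \ Y) = 0 ∧ ν Y = 0 := by
  refine ⟨Ioo 0 1 \ digitsEventuallyLE digitThreshold, sdiff_subset,
    measurableSet_Ioo.diff (measurableSet_digitsEventuallyLE _), ?_, ?_⟩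
  · rw [sdiff_sdiff_cancel_left fun x hx => hx.1]
    exact volume_digitsEventuallyLE monotone_digitThreshold isLittleO_digitThreshold
  · exact measure_mono_null (fun x hx => hx.2)
      (ae_iff.1 (hν.ae_mem_digitsEventuallyLE tsum_inv_two_pow_digitThreshold_ne_top))
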